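/- arXiv:2511.20875 — 2 statements merged into one kernel-verified Lean document; each statement's English description precedes it below -/
import Mathlib

section
/- Let X = I₀(f) be the free Wigner integral of a mirror symmetric kernel f ∈ L²(ℝ₊^m). Then the fourth free cumulant satisfies κ₄(X) = τ₀(X⁴) − 2τ₀(X²)² = Σ_{k=1}^{m−1} ‖f ⌢ₖ f‖²_{L²(ℝ₊^{2(m−k)})}; in particular κ₄(X) ≥ 0. -/
open MeasureTheory Finset Filter

noncomputable section

/-- The positive orthant in `ℝ^p`. -/
def posOrth (p : ℕ) : Set (Fin p → ℝ) := {t | ∀ i, 0 ≤ t i}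

/-- The involution `h*(t₁,...,t_p) = conj (h (t_p,...,t₁))`. -/
def mstar {p : ℕ} (f : (Fin p → ℝ) → ℂ) : (Fin p → ℝ) → ℂ :=
  fun t => starRingEnd ℂ (f (fun i => t (Fin.rev i)))

/-- The `L²(ℝ₊^p)` inner product `⟨u,v⟩ = ∫ u ⬝ conj v`. -/
def ip (p : ℕ) (u v : (Fin p → ℝ) → ℂ) : ℂ :=
  ∫ t in posOrth p, u t * starRingEnd ℂ (v t)

/-- Elementary tensor `(f ⊗ g)(t,r) = f(t) g(r)`. -/
def tens (m n : ℕ) (f : (Fin m → ℝ) → ℂ) (g : (Fin n → ℝ) → ℂ) :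
    (Fin (m + n) → ℝ) → ℂ :=
  fun x => f (fun i => x (Fin.castAdd n i)) * g (fun j => x (Fin.natAdd m j))

/-- The `k`-th contraction
`(f ⌢ₖ g)(t⃗,r⃗) = ∫ f(t⃗,s₁,...,s_k) g(s_k,...,s₁,r⃗) ds⃗` over the positive orthant. -/
def contr (m n k : ℕ) (f : (Fin m → ℝ) → ℂ) (g : (Fin n → ℝ) → ℂ) :
    (Fin (m + n - 2 * k) → ℝ) → ℂ :=
  if hc : k ≤ m ∧ k ≤ n then
    fun x => ∫ s : Fin k → ℝ in posOrth k,
      f (fun i => if h : (i : ℕ) < m - k then x ⟨i, by have := i.isLt; omega⟩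
          else s ⟨(i : ℕ) - (m - k), by have := i.isLt; omega⟩) *
      g (fun j => if h : (j : ℕ) < k then s ⟨k - 1 - (j : ℕ), by omega⟩
          else x ⟨(m - k) + ((j : ℕ) - k), by have := j.isLt; omega⟩)
  else 0

/-- Permutation action on kernels: `(π ⬝ f)(t⃗) = f(π⁻¹(t⃗))` where `π⁻¹(t⃗)ᵢ = t_{π(i)}`. -/
def permAct {p : ℕ} (π : Equiv.Perm (Fin p)) (f : (Fin p → ℝ) → ℂ) : (Fin p → ℝ) → ℂ :=
  fun t => f (fun i => t (π i))

/-- Number of inversions of a permutation. -/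
def invNum {p : ℕ} (π : Equiv.Perm (Fin p)) : ℕ :=
  (Finset.univ.filter fun ij : Fin p × Fin p => ij.1 < ij.2 ∧ π ij.2 < π ij.1).card

/-- The `q`-integer `[j]_q = 1 + q + ... + q^(j-1)`. -/
def qint (q : ℝ) (j : ℕ) : ℝ := ∑ i ∈ Finset.range j, q ^ i

/-- The `q`-factorial `[m]_q!`. -/
def qfact (q : ℝ) (m : ℕ) : ℝ := ∏ j ∈ Finset.range m, qint q (j + 1)

/-- The `q`-symmetrizer `P_q^{(p)} = Σ_π q^{inv π} π`. -/
def Pq (q : ℝ) (p : ℕ) (f : (Fin p → ℝ) → ℂ) : (Fin p → ℝ) → ℂ :=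
  ∑ π : Equiv.Perm (Fin p), (q ^ invNum π : ℝ) • permAct π f

/-- The minimal-inversion representatives of `S_p/(S_k × S_{p-k})`, i.e. the `(k,p-k)`-shuffles:
permutations increasing on `{0,...,k-1}` and on `{k,...,p-1}`. -/
def shuffles (k p : ℕ) : Finset (Equiv.Perm (Fin p)) :=
  Finset.univ.filter fun π => ∀ i j : Fin p, i < j →
    ((j : ℕ) < k ∨ k ≤ (i : ℕ)) → π i < π j

/-- The Gaussian binomial coefficient `binom(p,k)_q` as a shuffle sum. -/
def gaussBinom (q : ℝ) (p k : ℕ) : ℝ := ∑ π ∈ shuffles k p, q ^ invNum π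

/-- The adjoint `R*_{k,p} = Σ_{shuffles} q^{inv π} π⁻¹`. -/
def Rstar (q : ℝ) (k p : ℕ) (f : (Fin p → ℝ) → ℂ) : (Fin p → ℝ) → ℂ :=
  ∑ π ∈ shuffles k p, (q ^ invNum π : ℝ) • permAct π⁻¹ f

/-- The `q`-contraction `f ⌢ₖ_q g = (1 ⊗ Φₖ^q ⊗ 1)((R*_{m-k,m} f) ⊗ (R*_{k,n} g))`, where
`Φₖ^q(a ⊗ b) = ⟨a, b*⟩_q = ⟨a, P_q^{(k)} b*⟩`. -/
def qcontr (q : ℝ) (m n k : ℕ) (f : (Fin m → ℝ) → ℂ) (g : (Fin n → ℝ) → ℂ) :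
    (Fin (m + n - 2 * k) → ℝ) → ℂ :=
  if hc : k ≤ m ∧ k ≤ n then
    fun x => ∫ s : Fin k → ℝ in posOrth k,
      (Rstar q (m - k) m f)
        (fun i => if h : (i : ℕ) < m - k then x ⟨i, by have := i.isLt; omega⟩
            else s ⟨(i : ℕ) - (m - k), by have := i.isLt; omega⟩) *
      starRingEnd ℂ
        ((Pq q k (mstar (fun s' : Fin k → ℝ =>
            (Rstar q k n g)
              (fun j => if h : (j : ℕ) < k then s' ⟨(j : ℕ), h⟩
                  else x ⟨(m - k) + ((j : ℕ) - k), by have := j.isLt; omega⟩)))) s)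
  else 0

end

noncomputable section AuxLemmas

lemma posOrth_zero : posOrth 0 = Set.univ := by
  ext t; exact ⟨fun _ => trivial, fun _ i => i.elim0⟩

lemma integral_fin0 (c : ℂ) : (∫ _ : Fin 0 → ℝ in posOrth 0, c) = c := by
  rw [posOrth_zero, Measure.restrict_univ, integral_const]
  simp [MeasureTheory.volume_pi, Measure.pi_univ, Measure.real]

lemma ip_self_ofReal (p : ℕ) (u : (Fin p → ℝ) → ℂ) :
    ip p u u = ((∫ t in posOrth p, Complex.normSq (u t)) : ℝ) := by
  rw [ip]
  simp_rw [Complex.mul_conj]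
  exact integral_ofReal

lemma ip_self_re_nonneg (p : ℕ) (u : (Fin p → ℝ) → ℂ) : 0 ≤ (ip p u u).re := by
  rw [ip_self_ofReal, Complex.ofReal_re]
  exact integral_nonneg fun t => Complex.normSq_nonneg _

lemma conj_ip_self (p : ℕ) (u : (Fin p → ℝ) → ℂ) :
    starRingEnd ℂ (ip p u u) = ip p u u := by
  rw [ip_self_ofReal, Complex.conj_ofReal]

lemma ip_const (p : ℕ) (hp : p = 0) (a b : ℂ) :
    ip p (fun _ => a) (fun _ => b) = a * starRingEnd ℂ b := by
  subst hp; rw [ip, integral_fin0]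

lemma conj_app {m : ℕ} {f : (Fin m → ℝ) → ℂ} (hf : mstar f = f) (v : Fin m → ℝ) :
    starRingEnd ℂ (f v) = f (fun i => v (Fin.rev i)) := by
  have h := congrFun hf (fun i => v (Fin.rev i))
  simp only [mstar, Fin.rev_rev] at h
  rw [← h]

lemma mstar_contr {m k : ℕ} (hk : k ≤ m) (f : (Fin m → ℝ) → ℂ) (hf : mstar f = f) :
    mstar (contr m m k f f) = contr m m k f f := by
  funext x
  simp only [mstar, contr, dif_pos (⟨hk, hk⟩ : k ≤ m ∧ k ≤ m)]
  rw [← integral_conj]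
  congr 1
  funext s
  rw [map_mul, conj_app hf, conj_app hf, mul_comm]
  congr 1
  · congr 1
    funext i
    simp only [Fin.val_rev]
    rcases Nat.lt_or_ge (i : ℕ) (m - k) with h | h
    · rw [dif_neg (by have := i.isLt; omega), dif_pos h]
      congr 1
      apply Fin.ext
      simp only [Fin.val_rev]
      have := i.isLt
      omega
    · rw [dif_pos (by have := i.isLt; omega), dif_neg (by omega)]
      congr 1
      apply Fin.ext
      simp only [Fin.val_rev, Fin.val_mk]
      have := i.isLt
      omega
  · congr 1
    funext j
    simp only [Fin.val_rev]
    rcases Nat.lt_or_ge (j : ℕ) k with h | h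
    · rw [dif_neg (by have := j.isLt; omega), dif_pos h]
      congr 1
      apply Fin.ext
      simp only [Fin.val_rev, Fin.val_mk]
      have := j.isLt
      omega
    · rw [dif_pos (by have := j.isLt; omega), dif_neg (by omega)]
      congr 1
      apply Fin.ext
      simp only [Fin.val_rev]
      have := j.isLt
      omega

lemma contr_zero' {m : ℕ} (f g : (Fin m → ℝ) → ℂ) :
    contr m m 0 f g = fun x : Fin (m + m) → ℝ =>
      f (fun i => x (Fin.castAdd m i)) * g (fun j => x (Fin.natAdd m j)) := by
  funext x
  simp only [contr, dif_pos (⟨Nat.zero_le m, Nat.zero_le m⟩ : 0 ≤ m ∧ 0 ≤ m)]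
  have h1 : ∀ s : Fin 0 → ℝ,
      (f (fun i => if h : (i : ℕ) < m - 0 then x ⟨i, by have := i.isLt; omega⟩
          else s ⟨(i : ℕ) - (m - 0), by have := i.isLt; omega⟩) *
       g (fun j => if h : (j : ℕ) < 0 then s ⟨0 - 1 - (j : ℕ), by omega⟩
          else x ⟨(m - 0) + ((j : ℕ) - 0), by have := j.isLt; omega⟩)) =
      f (fun i => x (Fin.castAdd m i)) * g (fun j => x (Fin.natAdd m j)) := by
    intro s
    refine congrArg₂ (· * ·) (congrArg f ?_) (congrArg g ?_)
    · funext i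
      rw [dif_pos (by have := i.isLt; omega)]
      exact congrArg x (Fin.ext rfl)
    · funext j
      rw [dif_neg (by omega)]
      congr 1
  simp only [h1]
  exact integral_fin0 _

lemma contr_mm {m : ℕ} (f : (Fin m → ℝ) → ℂ) (hf : mstar f = f) :
    contr m m m f f = fun _ => ip m f f := by
  funext x
  simp only [contr, dif_pos (⟨le_refl m, le_refl m⟩ : m ≤ m ∧ m ≤ m)]
  rw [ip]
  congr 1
  funext s
  have ha : (fun i : Fin m => if h : (i : ℕ) < m - m then x ⟨i, by have := i.isLt; omega⟩
      else s ⟨(i : ℕ) - (m - m), by have := i.isLt; omega⟩) = s := by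
    funext i
    rw [dif_neg (by omega)]
    congr 1
    apply Fin.ext
    simp
  have hb : (fun j : Fin m => if h : (j : ℕ) < m then s ⟨m - 1 - (j : ℕ), by omega⟩
      else x ⟨(m - m) + ((j : ℕ) - m), by have := j.isLt; omega⟩) =
      (fun j => s (Fin.rev j)) := by
    funext j
    rw [dif_pos j.isLt]
    congr 1
    apply Fin.ext
    simp only [Fin.val_rev, Fin.val_mk]
    have := j.isLt
    omega
  rw [ha, hb, ← conj_app hf]

def eqv (m : ℕ) : ((Fin m → ℝ) × (Fin m → ℝ)) ≃ᵐ (Fin (m + m) → ℝ) :=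
  (MeasurableEquiv.sumPiEquivProdPi (fun _ : Fin m ⊕ Fin m => ℝ)).symm.trans
    (MeasurableEquiv.piCongrLeft (fun _ => ℝ) finSumFinEquiv)

lemma eqv_mp (m : ℕ) : MeasurePreserving (eqv m) volume volume := by
  have h1 := volume_measurePreserving_sumPiEquivProdPi_symm (fun _ : Fin m ⊕ Fin m => ℝ)
  have h2 := volume_measurePreserving_piCongrLeft (fun _ : Fin (m + m) => ℝ) finSumFinEquiv
  exact h2.comp h1

lemma eqv_left {m : ℕ} (u v : Fin m → ℝ) (i : Fin m) :
    eqv m (u, v) (Fin.castAdd m i) = u i := by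
  rw [← finSumFinEquiv_apply_left]
  rw [show eqv m (u, v) = (MeasurableEquiv.piCongrLeft (fun _ => ℝ) finSumFinEquiv)
    ((MeasurableEquiv.sumPiEquivProdPi (fun _ : Fin m ⊕ Fin m => ℝ)).symm (u, v)) from rfl]
  rw [MeasurableEquiv.piCongrLeft_apply_apply]
  rfl

lemma eqv_right {m : ℕ} (u v : Fin m → ℝ) (i : Fin m) :
    eqv m (u, v) (Fin.natAdd m i) = v i := by
  rw [← finSumFinEquiv_apply_right]
  rw [show eqv m (u, v) = (MeasurableEquiv.piCongrLeft (fun _ => ℝ) finSumFinEquiv)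
    ((MeasurableEquiv.sumPiEquivProdPi (fun _ : Fin m ⊕ Fin m => ℝ)).symm (u, v)) from rfl]
  rw [MeasurableEquiv.piCongrLeft_apply_apply]
  rfl

lemma eqv_preimage (m : ℕ) : (eqv m) ⁻¹' (posOrth (m + m)) = (posOrth m) ×ˢ (posOrth m) := by
  ext ⟨u, v⟩
  constructor
  · intro h
    refine ⟨fun i => ?_, fun i => ?_⟩
    · have := h (Fin.castAdd m i); rwa [eqv_left] at this
    · have := h (Fin.natAdd m i); rwa [eqv_right] at this
  · rintro ⟨h1, h2⟩ j
    refine Fin.addCases (fun i => ?_) (fun i => ?_) j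
    · rw [eqv_left]; exact h1 i
    · rw [eqv_right]; exact h2 i

lemma fubini_key {m : ℕ} (g : (Fin m → ℝ) → ℂ) :
    (∫ t in posOrth (m + m),
        g (fun i => t (Fin.castAdd m i)) * g (fun j => t (Fin.natAdd m j))) =
      (∫ t in posOrth m, g t) * (∫ t in posOrth m, g t) := by
  rw [← ((eqv_mp m).setIntegral_preimage_emb (eqv m).measurableEmbedding
    (fun t => g (fun i => t (Fin.castAdd m i)) * g (fun j => t (Fin.natAdd m j)))
    (posOrth (m + m)))]
  rw [eqv_preimage]
  have key : ∀ z : (Fin m → ℝ) × (Fin m → ℝ),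
      g (fun i => eqv m z (Fin.castAdd m i)) * g (fun j => eqv m z (Fin.natAdd m j)) =
      g z.1 * g z.2 := by
    rintro ⟨u, v⟩
    simp only [eqv_left, eqv_right]
  simp only [key]
  exact setIntegral_prod_mul g g _ _

lemma ip_contr_zero {m : ℕ} (f : (Fin m → ℝ) → ℂ) :
    ip (m + m - 2 * 0) (contr m m 0 f f) (contr m m 0 f f) = ip m f f * ip m f f := by
  have key := fubini_key (fun t => f t * starRingEnd ℂ (f t))
  refine Eq.trans ?_ key
  rw [show ip (m + m - 2 * 0) (contr m m 0 f f) (contr m m 0 f f)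
      = ip (m + m) (contr m m 0 f f) (contr m m 0 f f) from rfl]
  rw [ip, contr_zero']
  congr 1
  funext t
  rw [map_mul]
  ring

end AuxLemmas

/-- for a free Wigner integral `X = I₀(f)` of a mirror symmetric kernel,
`κ₄(X) = τ₀(X⁴) - 2τ₀(X²)² = Σ_{k=1}^{m-1} ‖f ⌢ₖ f‖² ≥ 0`. -/
theorem free_fourth_cumulant_contractions {A : Type*} [Ring A] [Algebra ℂ A]
    (τ : A →ₗ[ℂ] ℂ)
    (I : ∀ p : ℕ, ((Fin p → ℝ) → ℂ) → A)
    (hprod : ∀ (p r : ℕ) (u : (Fin p → ℝ) → ℂ) (v : (Fin r → ℝ) → ℂ),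
      I p u * I r v = ∑ k ∈ Finset.range (min p r + 1), I (p + r - 2 * k) (contr p r k u v))
    (hpair : ∀ (p : ℕ) (u v : (Fin p → ℝ) → ℂ), τ (I p u * I p v) = ip p u (mstar v))
    (horth : ∀ (p r : ℕ) (u : (Fin p → ℝ) → ℂ) (v : (Fin r → ℝ) → ℂ),
      p ≠ r → τ (I p u * I r v) = 0)
    (hvac : ∀ (p : ℕ) (u : (Fin p → ℝ) → ℂ), 1 ≤ p → τ (I p u) = 0)
    (m : ℕ) (hm : 1 ≤ m) (f : (Fin m → ℝ) → ℂ)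
    (hf2 : MemLp f 2 (volume.restrict (posOrth m))) (hf : mstar f = f) :
    (τ (I m f ^ 4) - 2 * τ (I m f ^ 2) ^ 2 =
      ∑ k ∈ Finset.Ico 1 m, ip (m + m - 2 * k) (contr m m k f f) (contr m m k f f)) ∧
    0 ≤ (τ (I m f ^ 4) - 2 * τ (I m f ^ 2) ^ 2).re := by
  classical
  set N := ip m f f with hN
  have hX2 : I m f ^ 2 = ∑ k ∈ Finset.range (m + 1),
      I (m + m - 2 * k) (contr m m k f f) := by
    rw [pow_two, hprod m m f f, min_self]
  have hτ2 : τ (I m f ^ 2) = N := by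
    rw [pow_two, hpair, hf]
  have hτ4 : τ (I m f ^ 4) = ∑ k ∈ Finset.range (m + 1),
      ip (m + m - 2 * k) (contr m m k f f) (contr m m k f f) := by
    have h4 : I m f ^ 4 = I m f ^ 2 * I m f ^ 2 := by
      rw [show (4 : ℕ) = 2 + 2 from rfl, pow_add]
    rw [h4, hX2, Finset.sum_mul_sum, map_sum]
    refine Finset.sum_congr rfl fun k hk => ?_
    have hkm : k ≤ m := Nat.lt_succ_iff.mp (Finset.mem_range.mp hk)
    rw [map_sum, Finset.sum_eq_single_of_mem k hk]
    · rw [hpair, mstar_contr hkm f hf]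
    · intro l hl hlk
      have hlm : l ≤ m := Nat.lt_succ_iff.mp (Finset.mem_range.mp hl)
      exact horth _ _ _ _ (by omega)
  have hEm : ip (m + m - 2 * m) (contr m m m f f) (contr m m m f f) = N * N := by
    rw [contr_mm f hf, ip_const _ (by omega), ← hN, conj_ip_self]
  have hsplit : ∑ k ∈ Finset.range (m + 1),
      ip (m + m - 2 * k) (contr m m k f f) (contr m m k f f) =
      N * N + (∑ k ∈ Finset.Ico 1 m,
        ip (m + m - 2 * k) (contr m m k f f) (contr m m k f f)) + N * N := by
    rw [Finset.sum_range_succ, hEm]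
    congr 1
    rw [Finset.range_eq_Ico, Finset.sum_eq_sum_Ico_succ_bot (by omega : 0 < m)]
    rw [ip_contr_zero, ← hN]
  have hmain : τ (I m f ^ 4) - 2 * τ (I m f ^ 2) ^ 2 =
      ∑ k ∈ Finset.Ico 1 m, ip (m + m - 2 * k) (contr m m k f f) (contr m m k f f) := by
    rw [hτ4, hτ2, hsplit]
    ring
  refine ⟨hmain, ?_⟩
  rw [hmain, Complex.re_sum]
  exact Finset.sum_nonneg fun k _ => ip_self_re_nonneg _ _
end

section
/- For fully symmetric f ∈ L²(ℝ₊^m) and g ∈ L²(ℝ₊^n) and 0 ≤ k ≤ m∧n, the q-contraction satisfies f ⌢ₖ_q g = [k]_q! · binom(m,k)_q · binom(n,k)_q · (f ⌢ₖ g), where f ⌢ₖ g is the ordinary L²-contraction. -/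
open MeasureTheory Finset Filter

section Aux

def revConj {p : ℕ} (π : Equiv.Perm (Fin p)) : Equiv.Perm (Fin p) :=
  Fin.revPerm.trans (π.trans Fin.revPerm)

lemma revConj_apply {p : ℕ} (π : Equiv.Perm (Fin p)) (i : Fin p) :
    revConj π i = Fin.rev (π (Fin.rev i)) := rfl

lemma revConj_revConj {p : ℕ} (π : Equiv.Perm (Fin p)) : revConj (revConj π) = π := by
  ext i
  simp [revConj_apply, Fin.rev_rev]

lemma invNum_revConj {p : ℕ} (π : Equiv.Perm (Fin p)) : invNum (revConj π) = invNum π := by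
  unfold invNum
  refine Finset.card_nbij' (fun ij => (ij.2.rev, ij.1.rev)) (fun ij => (ij.2.rev, ij.1.rev))
    ?_ ?_ ?_ ?_ <;> intro ij hij <;>
    simp only [Finset.coe_filter, Set.mem_setOf_eq, Finset.mem_filter, Finset.mem_univ, true_and, revConj_apply, Fin.rev_lt_rev,
      Fin.rev_rev] at hij ⊢
  · exact ⟨hij.1, hij.2⟩
  · exact ⟨hij.1, hij.2⟩

lemma revConj_mem_shuffles {k p : ℕ} (hk : k ≤ p) {π : Equiv.Perm (Fin p)}
    (hπ : π ∈ shuffles k p) : revConj π ∈ shuffles (p - k) p := by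
  simp only [shuffles, Finset.mem_filter, Finset.mem_univ, true_and] at hπ ⊢
  intro i j hij hcase
  have hji : Fin.rev j < Fin.rev i := by rwa [Fin.rev_lt_rev]
  have : π (Fin.rev j) < π (Fin.rev i) := by
    refine hπ _ _ hji ?_
    have hi := i.isLt
    have hj := j.isLt
    have hvi : (Fin.rev i : ℕ) = p - (i + 1) := Fin.val_rev i
    have hvj : (Fin.rev j : ℕ) = p - (j + 1) := Fin.val_rev j
    rcases hcase with h | h
    · right; omega
    · left; omega
  simpa only [revConj_apply, Fin.rev_lt_rev] using this

lemma gaussBinom_sub (q : ℝ) {p k : ℕ} (hk : k ≤ p) :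
    gaussBinom q p (p - k) = gaussBinom q p k := by
  unfold gaussBinom
  refine Finset.sum_nbij' (i := revConj) (j := revConj) ?_ ?_ ?_ ?_ ?_
  · intro π hπ
    have := revConj_mem_shuffles (Nat.sub_le p k) hπ
    rwa [Nat.sub_sub_self hk] at this
  · intro π hπ
    exact revConj_mem_shuffles hk hπ
  · intro π _; exact revConj_revConj π
  · intro π _; exact revConj_revConj π
  · intro π _; rw [invNum_revConj]

lemma invNum_split {p : ℕ} (π : Equiv.Perm (Fin (p + 1))) :
    invNum π = (π 0 : ℕ) +
      (Finset.univ.filter fun ij : Fin (p+1) × Fin (p+1) =>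
        ij.1 ≠ 0 ∧ ij.1 < ij.2 ∧ π ij.2 < π ij.1).card := by
  unfold invNum
  have hsplit := Finset.card_filter_add_card_filter_not
    (s := Finset.univ.filter fun ij : Fin (p+1) × Fin (p+1) => ij.1 < ij.2 ∧ π ij.2 < π ij.1)
    (p := fun ij => ij.1 = 0)
  rw [Finset.filter_filter, Finset.filter_filter] at hsplit
  rw [← hsplit]
  congr 1
  · -- card of pairs with fst = 0 equals π 0
    rw [← Fin.card_Iio (π 0)]
    refine Finset.card_nbij' (fun ij => π ij.2) (fun v => (0, π.symm v)) ?_ ?_ ?_ ?_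
    · intro ij hij
      simp only [Finset.mem_coe, Finset.mem_filter, Finset.mem_univ, true_and] at hij
      simp only [Finset.mem_coe, Finset.mem_Iio]
      rw [← hij.2]
      exact hij.1.2
    · intro v hv
      simp only [Finset.mem_coe, Finset.mem_Iio] at hv
      have hne : π.symm v ≠ 0 := by
        intro h
        have : v = π 0 := by rw [← h, Equiv.apply_symm_apply]
        exact absurd (this ▸ hv) (lt_irrefl _)
      simp only [Finset.mem_coe, Finset.mem_filter, Finset.mem_univ, true_and, Equiv.apply_symm_apply]
      exact ⟨⟨Fin.pos_iff_ne_zero.mpr hne, hv⟩, trivial⟩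
    · intro ij hij
      simp only [Finset.mem_coe, Finset.mem_filter, Finset.mem_univ, true_and] at hij
      show ((0 : Fin (p+1)), π.symm (π ij.2)) = ij
      rw [Equiv.symm_apply_apply]
      exact Prod.ext hij.2.symm rfl
    · intro v _
      exact Equiv.apply_symm_apply π v
  · congr 1
    apply Finset.filter_congr
    intro ij _
    constructor
    · rintro ⟨h1, h2⟩; exact ⟨h2, h1⟩
    · rintro ⟨h1, h2⟩; exact ⟨h2, h1⟩

lemma cycleRange_inv_lt_iff {p : ℕ} (a : Fin (p+1)) {u v : Fin (p+1)} (hu : u ≠ 0) (hv : v ≠ 0) :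
    (Fin.cycleRange a)⁻¹ u < (Fin.cycleRange a)⁻¹ v ↔ u < v := by
  set x := (Fin.cycleRange a)⁻¹ u with hx
  set y := (Fin.cycleRange a)⁻¹ v with hy
  have hxu : Fin.cycleRange a x = u := by rw [hx]; exact Equiv.apply_symm_apply _ _
  have hyv : Fin.cycleRange a y = v := by rw [hy]; exact Equiv.apply_symm_apply _ _
  have hxa : x ≠ a := fun h => hu (by rw [← hxu, h, Fin.cycleRange_self])
  have hya : y ≠ a := fun h => hv (by rw [← hyv, h, Fin.cycleRange_self])
  have hval : ∀ z : Fin (p+1), z ≠ a →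
      ((Fin.cycleRange a z : ℕ) = if z < a then (z : ℕ) + 1 else (z : ℕ)) := by
    intro z hz
    rcases lt_trichotomy z a with h | h | h
    · rw [if_pos h, Fin.coe_cycleRange_of_lt h]
    · exact absurd h hz
    · rw [if_neg (not_lt.mpr h.le), Fin.cycleRange_of_gt h]
  rw [← hxu, ← hyv]
  rw [Fin.lt_def, Fin.lt_def, hval x hxa, hval y hya]
  have h1 : (x : ℕ) ≠ (a : ℕ) := fun h => hxa (Fin.ext h)
  have h2 : (y : ℕ) ≠ (a : ℕ) := fun h => hya (Fin.ext h)
  simp only [Fin.lt_def]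
  split_ifs <;> omega

lemma invNum_cycleRange_mul {p : ℕ} (a : Fin (p+1)) (ρ : Equiv.Perm (Fin (p+1)))
    (h0 : ρ 0 = 0) :
    invNum ((Fin.cycleRange a)⁻¹ * ρ) = (a : ℕ) + invNum ρ := by
  set π := (Fin.cycleRange a)⁻¹ * ρ with hπdef
  have hπ : ∀ z, π z = (Fin.cycleRange a)⁻¹ (ρ z) := fun z => rfl
  have hπ0 : π 0 = a := by
    rw [hπ, h0, Equiv.Perm.inv_eq_iff_eq, Fin.cycleRange_self]
  rw [invNum_split π, invNum_split ρ, h0, hπ0, Fin.val_zero, zero_add]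
  congr 1
  congr 1
  apply Finset.filter_congr
  intro ij _
  constructor
  · rintro ⟨h1, h2, h3⟩
    refine ⟨h1, h2, ?_⟩
    have h2' : ij.2 ≠ 0 := Fin.pos_iff_ne_zero.mp (lt_of_le_of_lt (Fin.zero_le _) h2)
    have hr1 : ρ ij.1 ≠ 0 := fun h => h1 (ρ.injective (h.trans h0.symm))
    have hr2 : ρ ij.2 ≠ 0 := fun h => h2' (ρ.injective (h.trans h0.symm))
    rw [hπ, hπ, cycleRange_inv_lt_iff a hr2 hr1] at h3
    exact h3
  · rintro ⟨h1, h2, h3⟩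
    refine ⟨h1, h2, ?_⟩
    have h2' : ij.2 ≠ 0 := Fin.pos_iff_ne_zero.mp (lt_of_le_of_lt (Fin.zero_le _) h2)
    have hr1 : ρ ij.1 ≠ 0 := fun h => h1 (ρ.injective (h.trans h0.symm))
    have hr2 : ρ ij.2 ≠ 0 := fun h => h2' (ρ.injective (h.trans h0.symm))
    rw [hπ, hπ, cycleRange_inv_lt_iff a hr2 hr1]
    exact h3

def ext0 {p : ℕ} (τ : Equiv.Perm (Fin p)) : Equiv.Perm (Fin (p+1)) :=
  Equiv.Perm.decomposeFin.symm (0, τ)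

lemma ext0_zero {p : ℕ} (τ : Equiv.Perm (Fin p)) : ext0 τ 0 = 0 := by
  simp [ext0]

lemma ext0_succ {p : ℕ} (τ : Equiv.Perm (Fin p)) (j : Fin p) :
    ext0 τ j.succ = (τ j).succ := by
  simp [ext0]

lemma ext0_injective {p : ℕ} : Function.Injective (ext0 (p := p)) := by
  intro τ τ' h
  have := Equiv.Perm.decomposeFin.symm.injective h
  exact (Prod.mk.injEq _ _ _ _ ▸ this).2

lemma invNum_ext0 {p : ℕ} (τ : Equiv.Perm (Fin p)) : invNum (ext0 τ) = invNum τ := by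
  unfold invNum
  symm
  refine Finset.card_bij' (fun ij _ => (ij.1.succ, ij.2.succ))
    (fun ij hij => (ij.1.pred ?_, ij.2.pred ?_)) ?_ ?_ ?_ ?_
  · -- ij.1 ≠ 0
    simp only [Finset.mem_filter, Finset.mem_univ, true_and] at hij
    intro h
    rw [h, ext0_zero] at hij
    exact absurd hij.2 (Fin.not_lt_zero _)
  · -- ij.2 ≠ 0
    simp only [Finset.mem_filter, Finset.mem_univ, true_and] at hij
    intro h
    rw [h] at hij
    exact absurd hij.1 (Fin.not_lt_zero _)
  · intro ij hij
    simp only [Finset.mem_filter, Finset.mem_univ, true_and] at hij ⊢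
    refine ⟨Fin.succ_lt_succ_iff.mpr hij.1, ?_⟩
    rw [ext0_succ, ext0_succ]
    exact Fin.succ_lt_succ_iff.mpr hij.2
  · intro ij hij
    simp only [Finset.mem_filter, Finset.mem_univ, true_and] at hij ⊢
    constructor
    · rw [← Fin.succ_lt_succ_iff, Fin.succ_pred, Fin.succ_pred]
      exact hij.1
    · rw [← Fin.succ_lt_succ_iff, ← ext0_succ τ, ← ext0_succ τ, Fin.succ_pred, Fin.succ_pred]
      exact hij.2
  · intro ij hij
    simp [Fin.pred_succ]
  · intro ij hij
    simp [Fin.succ_pred]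

def insPerm {p : ℕ} (aτ : Fin (p+1) × Equiv.Perm (Fin p)) : Equiv.Perm (Fin (p+1)) :=
  (Fin.cycleRange aτ.1)⁻¹ * ext0 aτ.2

lemma insPerm_bijective {p : ℕ} : Function.Bijective (insPerm (p := p)) := by
  rw [Fintype.bijective_iff_injective_and_card]
  constructor
  · rintro ⟨a, τ⟩ ⟨a', τ'⟩ h
    have h0 : a = a' := by
      have := congrArg (fun σ : Equiv.Perm (Fin (p+1)) => σ 0) h
      simpa only [insPerm, Equiv.Perm.mul_apply, ext0_zero,
        Equiv.Perm.inv_eq_iff_eq, Fin.cycleRange_self] using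
        (by
          have h1 : ((Fin.cycleRange a)⁻¹ * ext0 τ) 0 = a := by
            rw [Equiv.Perm.mul_apply, ext0_zero, Equiv.Perm.inv_eq_iff_eq, Fin.cycleRange_self]
          have h2 : ((Fin.cycleRange a')⁻¹ * ext0 τ') 0 = a' := by
            rw [Equiv.Perm.mul_apply, ext0_zero, Equiv.Perm.inv_eq_iff_eq, Fin.cycleRange_self]
          rw [← h1, ← h2]
          exact this)
    subst h0
    have : ext0 τ = ext0 τ' := mul_left_cancel h
    rw [ext0_injective this]
  · simp [Fintype.card_perm, Nat.factorial_succ]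

theorem sum_q_pow_invNum (q : ℝ) (p : ℕ) :
    ∑ π : Equiv.Perm (Fin p), q ^ invNum π = qfact q p := by
  induction p with
  | zero =>
    have h0 : ∀ π : Equiv.Perm (Fin 0), invNum π = 0 := by
      intro π
      simp [invNum]
    simp [h0, qfact]
  | succ p ih =>
    have key : ∀ aτ : Fin (p+1) × Equiv.Perm (Fin p),
        q ^ ((aτ.1 : ℕ) + invNum aτ.2) = q ^ invNum (insPerm aτ) := by
      rintro ⟨a, τ⟩
      rw [insPerm, invNum_cycleRange_mul a (ext0 τ) (ext0_zero τ), invNum_ext0]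
    rw [← Fintype.sum_bijective insPerm insPerm_bijective
      (fun aτ => q ^ ((aτ.1 : ℕ) + invNum aτ.2)) (fun π => q ^ invNum π) key]
    rw [Fintype.sum_prod_type]
    simp_rw [pow_add]
    rw [← Finset.sum_mul_sum]
    rw [ih]
    have h2 : qfact q (p+1) = qfact q p * qint q (p+1) := by
      rw [qfact, qfact, Finset.prod_range_succ]
    have h3 : ∑ a : Fin (p+1), q ^ (a : ℕ) = qint q (p+1) := by
      rw [qint, ← Fin.sum_univ_eq_sum_range]
    rw [h3, h2, mul_comm]

def extPerm (k n : ℕ) (hkn : k ≤ n) (ρ : Equiv.Perm (Fin k)) : Equiv.Perm (Fin n) where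
  toFun j := if h : (j : ℕ) < k then Fin.castLE hkn (ρ ⟨j, h⟩) else j
  invFun j := if h : (j : ℕ) < k then Fin.castLE hkn (ρ⁻¹ ⟨j, h⟩) else j
  left_inv j := by
    dsimp only
    by_cases h : (j : ℕ) < k
    · rw [dif_pos h]
      have h2 : ((Fin.castLE hkn (ρ ⟨j, h⟩)) : ℕ) < k := (ρ ⟨j, h⟩).isLt
      rw [dif_pos h2]
      have h3 : (⟨((Fin.castLE hkn (ρ ⟨j, h⟩)) : ℕ), h2⟩ : Fin k) = ρ ⟨j, h⟩ := rfl
      rw [h3, Equiv.Perm.inv_def, Equiv.symm_apply_apply]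
      exact Fin.ext rfl
    · rw [dif_neg h, dif_neg h]
  right_inv j := by
    dsimp only
    by_cases h : (j : ℕ) < k
    · rw [dif_pos h]
      have h2 : ((Fin.castLE hkn (ρ⁻¹ ⟨j, h⟩)) : ℕ) < k := (ρ⁻¹ ⟨j, h⟩).isLt
      rw [dif_pos h2]
      have h3 : (⟨((Fin.castLE hkn (ρ⁻¹ ⟨j, h⟩)) : ℕ), h2⟩ : Fin k) = ρ⁻¹ ⟨j, h⟩ := rfl
      rw [h3, Equiv.Perm.inv_def, Equiv.apply_symm_apply]
      exact Fin.ext rfl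
    · rw [dif_neg h, dif_neg h]

lemma extPerm_apply_of_lt (k n : ℕ) (hkn : k ≤ n) (ρ : Equiv.Perm (Fin k)) (j : Fin n)
    (h : (j : ℕ) < k) : extPerm k n hkn ρ j = Fin.castLE hkn (ρ ⟨j, h⟩) := dif_pos h

lemma extPerm_apply_of_ge (k n : ℕ) (hkn : k ≤ n) (ρ : Equiv.Perm (Fin k)) (j : Fin n)
    (h : ¬ (j : ℕ) < k) : extPerm k n hkn ρ j = j := dif_neg h

lemma Rstar_of_symm (q : ℝ) (r p : ℕ) (f : (Fin p → ℝ) → ℂ)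
    (hf : ∀ π : Equiv.Perm (Fin p), permAct π f = f) :
    Rstar q r p f = (∑ π ∈ shuffles r p, q ^ invNum π) • f := by
  unfold Rstar
  rw [Finset.sum_smul]
  exact Finset.sum_congr rfl fun π _ => by rw [hf π⁻¹]

lemma Pq_of_symm (q : ℝ) (p : ℕ) (h : (Fin p → ℝ) → ℂ)
    (hh : ∀ π : Equiv.Perm (Fin p), permAct π h = h) :
    Pq q p h = qfact q p • h := by
  unfold Pq
  rw [Finset.sum_congr rfl (fun π _ => by rw [hh π] :
    ∀ π ∈ Finset.univ, (q ^ invNum π : ℝ) • permAct π h = (q ^ invNum π : ℝ) • h),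
    ← Finset.sum_smul, sum_q_pow_invNum]

lemma Pq_smul (q : ℝ) (p : ℕ) (c : ℝ) (h : (Fin p → ℝ) → ℂ) :
    Pq q p (c • h) = c • Pq q p h := by
  unfold Pq
  rw [Finset.smul_sum]
  refine Finset.sum_congr rfl fun π _ => ?_
  rw [show permAct π (c • h) = c • permAct π h from rfl, smul_comm]

end Aux

/-- for fully symmetric kernels, the `q`-contraction is a scalar multiple of
the ordinary contraction: `f ⌢ₖ_q g = [k]_q! binom(m,k)_q binom(n,k)_q (f ⌢ₖ g)`. -/
theorem qcontraction_eq_scalar_contraction (q : ℝ) (m n k : ℕ) (hkm : k ≤ m) (hkn : k ≤ n)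
    (f : (Fin m → ℝ) → ℂ) (g : (Fin n → ℝ) → ℂ)
    (hf2 : MemLp f 2 (volume.restrict (posOrth m)))
    (hg2 : MemLp g 2 (volume.restrict (posOrth n)))
    (hfsym : ∀ π : Equiv.Perm (Fin m), permAct π f = f) (hfreal : ∀ t, (f t).im = 0)
    (hgsym : ∀ π : Equiv.Perm (Fin n), permAct π g = g) (hgreal : ∀ t, (g t).im = 0) :
    qcontr q m n k f g =
      (qfact q k * gaussBinom q m k * gaussBinom q n k) • contr m n k f g := by
  have hc : k ≤ m ∧ k ≤ n := ⟨hkm, hkn⟩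
  have hg' : ∀ y, starRingEnd ℂ (g y) = g y := fun y => Complex.conj_eq_iff_im.mpr (hgreal y)
  funext x
  simp only [qcontr, contr, dif_pos hc, Pi.smul_apply]
  have h1 : Rstar q (m - k) m f = gaussBinom q m k • f := by
    rw [Rstar_of_symm q (m - k) m f hfsym]
    congr 1
    exact gaussBinom_sub q hkm
  have h2 : Rstar q k n g = gaussBinom q n k • g := by
    rw [Rstar_of_symm q k n g hgsym]; rfl
  rw [h1, h2]
  have hm : mstar (fun s' : Fin k → ℝ => (gaussBinom q n k • g)
        (fun j : Fin n => if h : (j : ℕ) < k then s' ⟨(j : ℕ), h⟩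
          else x ⟨(m - k) + ((j : ℕ) - k), by have := j.isLt; omega⟩)) =
      gaussBinom q n k • fun s : Fin k → ℝ => g
        (fun j : Fin n => if h : (j : ℕ) < k then s ⟨k - 1 - (j : ℕ), by omega⟩
          else x ⟨(m - k) + ((j : ℕ) - k), by have := j.isLt; omega⟩) := by
    funext s
    simp only [mstar, Pi.smul_apply, Complex.real_smul, map_mul, Complex.conj_ofReal, hg']
    congr 1
    refine congrArg g (funext fun j => ?_)
    by_cases h : (j : ℕ) < k
    · rw [dif_pos h, dif_pos h]
      refine congrArg s (Fin.ext ?_)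
      simp only [Fin.val_rev]
      omega
    · rw [dif_neg h, dif_neg h]
  rw [hm]
  have hsymC : ∀ π : Equiv.Perm (Fin k), permAct π (fun s : Fin k → ℝ => g
        (fun j : Fin n => if h : (j : ℕ) < k then s ⟨k - 1 - (j : ℕ), by omega⟩
          else x ⟨(m - k) + ((j : ℕ) - k), by have := j.isLt; omega⟩)) =
      fun s : Fin k → ℝ => g
        (fun j : Fin n => if h : (j : ℕ) < k then s ⟨k - 1 - (j : ℕ), by omega⟩
          else x ⟨(m - k) + ((j : ℕ) - k), by have := j.isLt; omega⟩) := by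
    intro π
    funext s
    simp only [permAct]
    have key : (fun j : Fin n => if h : (j : ℕ) < k then s (π ⟨k - 1 - (j : ℕ), by omega⟩)
          else x ⟨(m - k) + ((j : ℕ) - k), by have := j.isLt; omega⟩) =
        fun j : Fin n => (fun j' : Fin n => if h : (j' : ℕ) < k then s ⟨k - 1 - (j' : ℕ), by omega⟩
          else x ⟨(m - k) + ((j' : ℕ) - k), by have := j'.isLt; omega⟩)
          (extPerm k n hkn (revConj π) j) := by
      funext j
      by_cases h : (j : ℕ) < k
      · rw [dif_pos h, extPerm_apply_of_lt k n hkn _ j h]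
        have hlt : ((Fin.castLE hkn (revConj π ⟨(j : ℕ), h⟩)) : ℕ) < k :=
          (revConj π ⟨(j : ℕ), h⟩).isLt
        dsimp only
        rw [dif_pos hlt]
        refine congrArg s (Fin.ext ?_)
        dsimp only
        have h1' : ((Fin.castLE hkn (revConj π ⟨(j : ℕ), h⟩)) : ℕ)
            = k - ((π (Fin.rev ⟨(j : ℕ), h⟩) : ℕ) + 1) := by
          simp [revConj_apply]
        rw [h1']
        have h2' : (⟨k - 1 - (j : ℕ), by omega⟩ : Fin k) = Fin.rev ⟨(j : ℕ), h⟩ :=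
          Fin.ext (by simp only [Fin.val_rev]; omega)
        rw [h2']
        have := (π (Fin.rev ⟨(j : ℕ), h⟩)).isLt
        omega
      · rw [dif_neg h, extPerm_apply_of_ge k n hkn _ j h]
        dsimp only
        rw [dif_neg h]
    rw [key]
    exact congrFun (hgsym (extPerm k n hkn (revConj π)))
      (fun j' : Fin n => if h : (j' : ℕ) < k then s ⟨k - 1 - (j' : ℕ), by omega⟩
        else x ⟨(m - k) + ((j' : ℕ) - k), by have := j'.isLt; omega⟩)
  rw [Pq_smul, Pq_of_symm q k _ hsymC]
  simp only [Pi.smul_apply, Complex.real_smul, map_mul, Complex.conj_ofReal, hg']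
  rw [← MeasureTheory.integral_const_mul]
  refine integral_congr_ae (Filter.Eventually.of_forall fun s => ?_)
  push_cast
  ring
end
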